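/- In a left diring R with left multiplicative bar-unit e_ℓ, for all x, y ∈ R and any two choices of products ∗, ⋄ ∈ {⇀·, ↼·}, one has x ∗ y ≡ x ⋄ y (mod ℏ⁺(R)), i.e., x⇀·y − x↼·y lies in the additive halo ℏ⁺(R). -/
import Mathlib

universe u v

/-- A left diring: an additive abelian group with a dimonoid structure
(left product `ldL` = ⇀·, right product `ldR` = ↼·) having a left bar-unit `ldE`,
with both products distributing over addition on both sides. -/
class LeftDiring (R : Type u) extends AddCommGroup R where
  ldL : R → R → R
  ldR : R → R → R
  ldE : R
  ax1 : ∀ x y z : R, ldL x (ldL y z) = ldL (ldL x y) z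
  ax2 : ∀ x y z : R, ldL (ldL x y) z = ldL x (ldR y z)
  ax3 : ∀ x y z : R, ldL (ldR x y) z = ldR x (ldL y z)
  ax4 : ∀ x y z : R, ldR (ldL x y) z = ldR x (ldR y z)
  ax5 : ∀ x y z : R, ldR x (ldR y z) = ldR (ldR x y) z
  ax6 : ∀ x : R, ldR ldE x = x
  dist1 : ∀ x y z : R, ldL x (y + z) = ldL x y + ldL x z
  dist2 : ∀ x y z : R, ldL (x + y) z = ldL x z + ldL y z
  dist3 : ∀ x y z : R, ldR x (y + z) = ldR x y + ldR x z
  dist4 : ∀ x y z : R, ldR (x + y) z = ldR x z + ldR y z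

open LeftDiring

lemma ldL_zero {R : Type u} [LeftDiring R] (x : R) : ldL x (0 : R) = 0 := by
  have h := dist1 x (0 : R) 0
  simpa using h.symm

lemma ldL_sub {R : Type u} [LeftDiring R] (x a b : R) :
    ldL x (a - b) = ldL x a - ldL x b := by
  have h : ldL x (a - b) + ldL x b = ldL x a := by
    rw [← dist1, sub_add_cancel]
  exact eq_sub_of_add_eq h

lemma key {R : Type u} [LeftDiring R] (x y : R) :
    ldL (ldE : R) (ldL x y) = ldL (ldE : R) (ldR x y) := by
  rw [ax1, ax2]

/-- For all `x, y` and any products `∗, ⋄ ∈ {⇀·, ↼·}`, `x ∗ y ≡ x ⋄ y (mod ℏ⁺(R))`. -/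
theorem stmt2 {R : Type u} [LeftDiring R] :
    ∀ star ∈ ({ldL, ldR} : Set (R → R → R)), ∀ diam ∈ ({ldL, ldR} : Set (R → R → R)),
      ∀ x y : R, star x y - diam x y ∈ {z : R | ldL ldE z = 0} := by
  intro star hs diam hd x y
  simp only [Set.mem_insert_iff, Set.mem_singleton_iff] at hs hd
  simp only [Set.mem_setOf_eq]
  rcases hs with hs | hs <;> rcases hd with hd | hd <;> subst hs <;> subst hd <;>
    rw [ldL_sub] <;> simp [key, ldL_zero]
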